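/- arXiv:1101.3390 — 6 statements merged into one kernel-verified Lean document; each statement's English description precedes it below -/
import Mathlib

section
/- Let g ≥ 1 and let p be a polynomial with real coefficients of degree n = 2g, with coefficients c_i, such that c_0 > 0, p is palindromic (c_i = c_{n-i} for all 0 ≤ i ≤ n), and the coefficients of p alternate in sign ((-1)^i · c_i ≥ 0 for every i ≥ 0). If at least 2g - 2 of the complex roots of p, counted with multiplicity, lie on the unit circle, then every complex root z of p satisfies Re z > -1. -/
/-!
Alternating signs and a positive constant term make `p` positive on `(-∞, 0]`, so real roots
are positive, and a non-real root on the unit circle has real part in `(-1, 1)`. A non-real root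
`z` off the circle is impossible: since `p` is real and self-reciprocal, `z`, `z̄`, `z⁻¹`, `z̄⁻¹`
are four distinct roots off the circle, while at most `2g - (2g - 2) = 2` roots lie off it.
-/

open Polynomial ComplexConjugate

namespace Polynomial

theorem eval_pos_of_alternating_of_nonpos {p : ℝ[X]}
    (halt : ∀ i, 0 ≤ (-1 : ℝ) ^ i * p.coeff i) (h0 : 0 < p.coeff 0) {x : ℝ} (hx : x ≤ 0) :
    0 < p.eval x := by
  rw [eval_eq_sum_range]
  refine Finset.sum_pos' (fun i _ => ?_) ⟨0, by simp, by simpa using h0⟩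
  have hterm : p.coeff i * x ^ i = ((-1) ^ i * p.coeff i) * (-x) ^ i := by
    rw [mul_right_comm, ← mul_pow, neg_one_mul, neg_neg, mul_comm]
  rw [hterm]
  exact mul_nonneg (halt i) (pow_nonneg (neg_nonneg.mpr hx) i)

theorem pos_of_isRoot_of_alternating {p : ℝ[X]}
    (halt : ∀ i, 0 ≤ (-1 : ℝ) ^ i * p.coeff i) (h0 : 0 < p.coeff 0) {x : ℝ} (hx : p.IsRoot x) :
    0 < x := by
  by_contra! hx'
  exact (eval_pos_of_alternating_of_nonpos halt h0 hx').ne' hx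

theorem reverse_eq_self_of_coeff_eq {R : Type*} [Semiring R] {p : R[X]}
    (hpal : ∀ i ≤ p.natDegree, p.coeff i = p.coeff (p.natDegree - i)) : p.reverse = p := by
  ext i
  rw [coeff_reverse]
  rcases le_or_gt i p.natDegree with h | h
  · rw [revAt_le h, ← hpal i h]
  · rw [revAt_eq_self_of_lt h]

theorem aeval_inv_eq_zero_of_reverse_eq_self {R K : Type*} [CommSemiring R] [Field K]
    [Algebra R K] {p : R[X]} (hrev : p.reverse = p) {z : K} (hz0 : z ≠ 0)
    (hz : aeval z p = 0) : aeval z⁻¹ p = 0 := by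
  let _ := invertibleOfNonzero hz0
  have := (eval₂_reverse_eq_zero_iff (algebraMap R K) z p).mpr hz
  rwa [hrev, invOf_eq_inv] at this

end Polynomial

theorem ne_inv_of_norm_eq_of_norm_ne_one {𝕜 : Type*} [NormedDivisionRing 𝕜] {a b : 𝕜}
    (hab : ‖a‖ = ‖b‖) (hb0 : b ≠ 0) (hb : ‖b‖ ≠ 1) : a ≠ b⁻¹ := by
  rintro rfl
  rw [norm_inv] at hab
  have hpos : 0 < ‖b‖ := norm_pos_iff.mpr hb0
  have : ‖b‖ * ‖b‖ = 1 := calc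
    ‖b‖ * ‖b‖ = ‖b‖⁻¹ * ‖b‖ := by rw [hab]
    _ = 1 := inv_mul_cancel₀ hpos.ne'
  rcases mul_self_eq_one_iff.mp this with h | h
  · exact hb h
  · linarith

theorem Complex.neg_one_lt_re_of_norm_eq_one {z : ℂ} (hz : ‖z‖ = 1) (him : z.im ≠ 0) :
    -1 < z.re := by
  have hsq : z.re * z.re + z.im * z.im = 1 := by
    rw [← Complex.normSq_apply, ← Complex.sq_norm, hz, one_pow]
  nlinarith [mul_self_pos.mpr him]

theorem four_le_card_roots_map_filter_norm_ne_one {p : ℝ[X]} (hp : p ≠ 0) (hrev : p.reverse = p)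
    {z : ℂ} (hz : aeval z p = 0) (him : z.im ≠ 0) (hnorm : ‖z‖ ≠ 1) :
    4 ≤ ((p.map (algebraMap ℝ ℂ)).roots.filter fun w => ‖w‖ ≠ 1).card := by
  have hz0 : z ≠ 0 := fun h => him (by simp [h])
  have hz0' : conj z ≠ 0 := (_root_.map_ne_zero _).mpr hz0
  have hnorm' : ‖conj z‖ ≠ 1 := by rwa [Complex.norm_conj]
  have hconj : z ≠ conj z := fun h => him (Complex.conj_eq_iff_im.mp h.symm)
  have hnodup : ({z, conj z, z⁻¹, (conj z)⁻¹} : Multiset ℂ).Nodup := by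
    simp only [Multiset.insert_eq_cons, Multiset.nodup_cons, Multiset.mem_cons,
      Multiset.mem_singleton, Multiset.nodup_singleton, and_true, not_or]
    exact ⟨⟨hconj, ne_inv_of_norm_eq_of_norm_ne_one rfl hz0 hnorm,
        ne_inv_of_norm_eq_of_norm_ne_one (Complex.norm_conj z).symm hz0' hnorm'⟩,
      ⟨ne_inv_of_norm_eq_of_norm_ne_one (Complex.norm_conj z) hz0 hnorm,
        ne_inv_of_norm_eq_of_norm_ne_one rfl hz0' hnorm'⟩,
      fun h => hconj (inv_injective h)⟩
  have hmem : ∀ w : ℂ, aeval w p = 0 → ‖w‖ ≠ 1 →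
      w ∈ (p.map (algebraMap ℝ ℂ)).roots.filter fun w => ‖w‖ ≠ 1 := fun w hw hw1 =>
    Multiset.mem_filter.mpr
      ⟨(mem_roots_map_of_injective (algebraMap ℝ ℂ).injective hp).mpr hw, hw1⟩
  have hconj_root : aeval (conj z) p = 0 := by rw [aeval_conj, hz, map_zero]
  have hsub : ({z, conj z, z⁻¹, (conj z)⁻¹} : Multiset ℂ) ≤
      (p.map (algebraMap ℝ ℂ)).roots.filter fun w => ‖w‖ ≠ 1 := by
    refine (Multiset.le_iff_subset hnodup).mpr fun w hw => ?_
    simp only [Multiset.insert_eq_cons, Multiset.mem_cons, Multiset.mem_singleton] at hw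
    rcases hw with rfl | rfl | rfl | rfl
    · exact hmem _ hz hnorm
    · exact hmem _ hconj_root hnorm'
    · exact hmem _ (aeval_inv_eq_zero_of_reverse_eq_self hrev hz0 hz)
        (by rwa [norm_inv, inv_ne_one])
    · exact hmem _ (aeval_inv_eq_zero_of_reverse_eq_self hrev hz0' hconj_root)
        (by rwa [norm_inv, inv_ne_one])
  simpa using Multiset.card_le_card hsub

theorem stmt_1_general (g : ℕ) (p : Polynomial ℝ)
    (hdeg : p.natDegree = 2 * g)
    (h0 : 0 < p.coeff 0)
    (hpal : ∀ i ≤ p.natDegree, p.coeff i = p.coeff (p.natDegree - i))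
    (halt : ∀ i : ℕ, 0 ≤ (-1 : ℝ) ^ i * p.coeff i)
    (hcirc : 2 * g - 2 ≤
      ((p.map (algebraMap ℝ ℂ)).roots.filter fun z => ‖z‖ = 1).card) :
    ∀ z : ℂ, Polynomial.aeval z p = 0 → -1 < z.re := by
  have hp : p ≠ 0 := by rintro rfl; simp at h0
  intro z hz
  by_cases him : z.im = 0
  · have hroot : p.IsRoot z.re := by
      rwa [← Complex.re_add_im z, him, Complex.ofReal_zero, zero_mul, add_zero,
        ← Complex.coe_algebraMap, aeval_algebraMap_apply_eq_algebraMap_eval,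
        Complex.coe_algebraMap, Complex.ofReal_eq_zero] at hz
    linarith [pos_of_isRoot_of_alternating halt h0 hroot]
  by_cases hnorm : ‖z‖ = 1
  · exact Complex.neg_one_lt_re_of_norm_eq_one hnorm him
  have hoff := four_le_card_roots_map_filter_norm_ne_one hp (reverse_eq_self_of_coeff_eq hpal)
    hz him hnorm
  have hsplit := congrArg Multiset.card
    (Multiset.filter_add_not (fun w : ℂ => ‖w‖ = 1) (p.map (algebraMap ℝ ℂ)).roots)
  rw [Multiset.card_add,
    IsAlgClosed.card_roots_map_eq_natDegree_of_injective p (algebraMap ℝ ℂ).injective, hdeg]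
    at hsplit
  simp only [ne_eq] at hoff
  omega

/-- Let `g ≥ 1` and let `p` be a real polynomial of degree `2g` with positive
constant term, palindromic coefficients and coefficients alternating in sign.
If at least `2g - 2` of the complex roots of `p` (counted with multiplicity)
lie on the unit circle, then every complex root `z` of `p` satisfies `Re z > -1`. -/
theorem stmt_1 (g : ℕ) (hg : 1 ≤ g) (p : Polynomial ℝ)
    (hdeg : p.natDegree = 2 * g)
    (h0 : 0 < p.coeff 0)
    (hpal : ∀ i ≤ p.natDegree, p.coeff i = p.coeff (p.natDegree - i))
    (halt : ∀ i : ℕ, 0 ≤ (-1 : ℝ) ^ i * p.coeff i)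
    (hcirc : 2 * g - 2 ≤
      ((p.map (algebraMap ℝ ℂ)).roots.filter fun z => ‖z‖ = 1).card) :
    ∀ z : ℂ, Polynomial.aeval z p = 0 → -1 < z.re :=
  stmt_1_general g p hdeg h0 hpal halt hcirc
end

section
/- Let p be a polynomial with real coefficients of degree 4, with coefficients c_i, such that c_0 > 0, p is palindromic (c_i = c_{4-i} for all 0 ≤ i ≤ 4), and the coefficients of p alternate in sign ((-1)^i · c_i ≥ 0 for every i ≥ 0). Then every complex root z of p satisfies Re z > -1. -/
theorem key (a b c : ℝ) (ha : 0 < a) (hb : 0 ≤ b) (hc : 0 ≤ c) (z : ℂ)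
    (hz : (a:ℂ)*z^4 - b*z^3 + c*z^2 - b*z + a = 0) : -1 < z.re := by
  by_contra h
  push_neg at h
  have hz0 : z ≠ 0 := by
    intro h0
    rw [h0] at hz
    simp at hz
    have : a = 0 := by exact_mod_cast hz
    linarith
  have hs : Complex.normSq z ≠ 0 := (Complex.normSq_pos.2 hz0).ne'
  have hs1 : 1 ≤ Complex.normSq z := by
    rw [Complex.normSq_apply]; nlinarith [sq_nonneg z.im]
  set w := z + z⁻¹ with hw
  have hkey : (a:ℂ)*w^2 - b*w + ((c:ℂ) - 2*a) = 0 := by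
    have h2 : z^2 * ((a:ℂ)*w^2 - b*w + ((c:ℂ) - 2*a)) = 0 := by
      rw [← hz, hw]
      field_simp
      ring
    rcases mul_eq_zero.1 h2 with h3 | h3
    · exact absurd h3 (pow_ne_zero 2 hz0)
    · exact h3
  have hur : w.re = z.re + z.re / Complex.normSq z := by
    simp [hw, Complex.add_re, Complex.inv_re]
  have hui : w.im = z.im - z.im / Complex.normSq z := by
    simp [hw, Complex.add_im, Complex.inv_im, sub_eq_add_neg, neg_div]
  have hre : a * (w.re^2 - w.im^2) - b * w.re + (c - 2*a) = 0 := by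
    have := congrArg Complex.re hkey
    simp [Complex.mul_re, Complex.mul_im, pow_two] at this
    nlinarith [this]
  have him : (a * (2 * w.re) - b) * w.im = 0 := by
    have := congrArg Complex.im hkey
    simp [Complex.mul_re, Complex.mul_im, pow_two] at this
    nlinarith [this]
  have hule : w.re ≤ -1 := by
    rw [hur]
    have : z.re / Complex.normSq z ≤ 0 :=
      div_nonpos_of_nonpos_of_nonneg (by linarith) (by positivity)
    linarith
  have hvne : w.im = 0 := by
    rcases mul_eq_zero.1 him with h3 | h3
    · nlinarith
    · exact h3
  have hy : z.im = 0 := by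
    rw [hui] at hvne
    have : z.im * (Complex.normSq z - 1) = 0 := by
      field_simp at hvne
      nlinarith [hvne]
    rcases mul_eq_zero.1 this with h3 | h3
    · exact h3
    · have : Complex.normSq z = 1 := by linarith
      rw [Complex.normSq_apply] at this
      nlinarith
  have hu2 : w.re ≤ -2 := by
    rw [hur, Complex.normSq_apply, hy]
    have hx : z.re ≤ -1 := h
    have hxn : z.re ≠ 0 := by intro h'; rw [h'] at hx; linarith
    rw [mul_zero, add_zero]
    have hxlt : z.re < 0 := by linarith
    have key2 : z.re * (z.re + z.re / (z.re * z.re)) = z.re^2 + 1 := by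
      field_simp
    nlinarith [key2, sq_nonneg (z.re + 1)]
  rw [hvne] at hre
  nlinarith [sq_nonneg (w.re + 2)]

/-- A real polynomial of degree `4` with positive constant term, palindromic
coefficients (`cᵢ = c_{4-i}`) and coefficients alternating in sign
(`(-1)^i · cᵢ ≥ 0`) has all its complex roots with real part `> -1`. -/
theorem stmt_2 (p : Polynomial ℝ)
    (hdeg : p.natDegree = 4)
    (h0 : 0 < p.coeff 0)
    (hpal : ∀ i ≤ 4, p.coeff i = p.coeff (4 - i))
    (halt : ∀ i : ℕ, 0 ≤ (-1 : ℝ) ^ i * p.coeff i) :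
    ∀ z : ℂ, Polynomial.aeval z p = 0 → -1 < z.re := by
  intro z hz
  have c4 : p.coeff 4 = p.coeff 0 := (hpal 0 (by norm_num)).symm
  have c3 : p.coeff 3 = p.coeff 1 := (hpal 1 (by norm_num)).symm
  have hb : 0 ≤ -p.coeff 1 := by have := halt 1; simpa using this
  have hc : 0 ≤ p.coeff 2 := by have := halt 2; simpa using this
  have heval : Polynomial.aeval z p =
      (p.coeff 0 : ℂ) * z^4 - (-p.coeff 1 : ℝ) * z^3 + (p.coeff 2 : ℂ) * z^2
        - (-p.coeff 1 : ℝ) * z + (p.coeff 0 : ℂ) := by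
    rw [Polynomial.aeval_eq_sum_range, hdeg]
    simp [Finset.sum_range_succ, c4, c3, Complex.real_smul]
    ring
  rw [heval] at hz
  exact key (p.coeff 0) (-p.coeff 1) (p.coeff 2) h0 hb hc z hz
end

section
/- Let p be a polynomial with real coefficients of degree 6, with coefficients c_i, such that c_0 > 0, p is palindromic (c_i = c_{6-i} for all 0 ≤ i ≤ 6), and the coefficients of p alternate in sign ((-1)^i · c_i ≥ 0 for every i ≥ 0). If p has a complex root z with Re z ≤ -1, then p has a real root x with x > 1 and x + 1/x > 2 - c_5/c_6. -/
/-!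
For a palindromic sextic, `p(z) = z³ g(z + z⁻¹)` with the real cubic
`g = c₆ X³ + c₅ X² + (c₄ - 3c₆) X + (c₃ - 2c₅)`. Alternating signs make `p` positive on
`(-∞, 0]`, so the root `z` with `Re z ≤ -1` is not real; then `|z| > 1`, and `u = z + z⁻¹` is a
non-real root of `g` with `Re u < -1`. The roots `u, ū, R` of `g` sum to `-c₅/c₆`, so the third
root `R = -c₅/c₆ - 2 Re u` is real and exceeds `2 - c₅/c₆ ≥ 2`. Solving `x + x⁻¹ = R` gives
`x > 1`, and `p(x) = x³ g(R) = 0`.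
-/

open Polynomial ComplexConjugate

namespace Polynomial

theorem eval_pos_of_nonpos_of_alternating {p : ℝ[X]} (h0 : 0 < p.coeff 0)
    (halt : ∀ i : ℕ, 0 ≤ (-1 : ℝ) ^ i * p.coeff i) {t : ℝ} (ht : t ≤ 0) :
    0 < p.eval t := by
  rw [eval_eq_sum_range, Finset.sum_range_succ', pow_zero, mul_one]
  refine add_pos_of_nonneg_of_pos (Finset.sum_nonneg fun i _ => ?_) h0
  have hsign : ((-1 : ℝ) ^ (i + 1)) * (-1) ^ (i + 1) = 1 := by rw [← mul_pow]; norm_num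
  have hterm : p.coeff (i + 1) * t ^ (i + 1)
      = (-1) ^ (i + 1) * p.coeff (i + 1) * (-t) ^ (i + 1) := by
    rw [neg_pow t]; linear_combination (-(p.coeff (i + 1)) * t ^ (i + 1)) * hsign
  rw [hterm]
  exact mul_nonneg (halt _) (pow_nonneg (neg_nonneg.2 ht) _)

theorem im_ne_zero_of_aeval_eq_zero {p : ℝ[X]} (hpos : ∀ t ≤ 0, 0 < p.eval t) {z : ℂ}
    (hz : aeval z p = 0) (hre : z.re ≤ 0) : z.im ≠ 0 := by
  intro him
  obtain ⟨r, rfl⟩ : ∃ r : ℝ, (r : ℂ) = z := ⟨z.re, Complex.ext rfl (by simp [him])⟩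
  have h : ((p.eval r : ℝ) : ℂ) = 0 :=
    (aeval_algebraMap_apply_eq_algebraMap_eval r p).symm.trans hz
  exact (hpos r hre).ne' (Complex.ofReal_eq_zero.1 h)

theorem aeval_eq_pow_three_mul_aeval_add_inv_of_palindromic {K : Type*} [Field K]
    [Algebra ℝ K] {p : ℝ[X]} (hdeg : p.natDegree = 6)
    (hpal : ∀ i ≤ 6, p.coeff i = p.coeff (6 - i)) {z : K} (hz : z ≠ 0) :
    aeval z p = z ^ 3 * aeval (z + z⁻¹) (C (p.coeff 6) * X ^ 3 + C (p.coeff 5) * X ^ 2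
      + C (p.coeff 4 - 3 * p.coeff 6) * X + C (p.coeff 3 - 2 * p.coeff 5)) := by
  rw [aeval_eq_sum_range, hdeg]
  simp only [Finset.sum_range_succ, Finset.sum_range_zero, hpal 0 (by norm_num),
    hpal 1 (by norm_num), hpal 2 (by norm_num), Algebra.smul_def, map_add, map_mul, map_sub,
    aeval_C, aeval_X, map_pow, map_ofNat]
  field_simp
  ring

theorem eval_neg_div_sub_two_re_eq_zero_of_nonreal_root {a b c d : ℝ} (ha : a ≠ 0) {u : ℂ}
    (hu : u.im ≠ 0) (h : aeval u (C a * X ^ 3 + C b * X ^ 2 + C c * X + C d) = 0) :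
    eval (-b / a - 2 * u.re) (C a * X ^ 3 + C b * X ^ 2 + C c * X + C d) = 0 := by
  have hconj := aeval_conj (C a * X ^ 3 + C b * X ^ 2 + C c * X + C d) u
  rw [h, map_zero] at hconj
  simp only [map_add, map_mul, map_pow, aeval_C, aeval_X, Complex.coe_algebraMap] at h hconj
  simp only [eval_add, eval_mul, eval_pow, eval_C, eval_X]
  set R := -b / a - 2 * u.re with hR
  have hsum : u + conj u = 2 * u.re := by rw [Complex.add_conj]; push_cast; ring
  have hvieta : (a : ℂ) * R + b + a * (u + conj u) = 0 := by
    have ha' : (a : ℂ) ≠ 0 := by exact_mod_cast ha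
    rw [hsum, hR]; push_cast; field_simp; ring
  have hne : u - conj u ≠ 0 := by rw [Complex.sub_conj]; simp [hu, Complex.I_ne_zero]
  have hprod : (u - conj u) * ((a * R ^ 3 + b * R ^ 2 + c * R + d : ℝ) : ℂ) = 0 := by
    push_cast
    linear_combination (R - conj u) * h - (R - u) * hconj
      + (R - u) * (R - conj u) * (u - conj u) * hvieta
  exact_mod_cast (mul_eq_zero.1 hprod).resolve_left hne

end Polynomial

namespace Complex

theorem re_add_inv_lt_neg_one {z : ℂ} (hre : z.re ≤ -1) : (z + z⁻¹).re < -1 := by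
  have hz : z ≠ 0 := fun h => by simp [h] at hre; linarith
  have hinv : z.re / normSq z < 0 := div_neg_of_neg_of_pos (by linarith) (normSq_pos.2 hz)
  rw [add_re, inv_re]
  linarith

theorem im_add_inv_ne_zero {z : ℂ} (him : z.im ≠ 0) (hre : z.re ≤ -1) :
    (z + z⁻¹).im ≠ 0 := by
  have hnorm : 1 < normSq z := by
    rw [normSq_apply]; nlinarith [mul_self_pos.2 him]
  have hfactor : z.im + -z.im / normSq z = z.im * (1 - (normSq z)⁻¹) := by ring
  rw [add_im, inv_im, hfactor]
  exact mul_ne_zero him (sub_ne_zero.2 (inv_lt_one_of_one_lt₀ hnorm).ne')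

end Complex

theorem Real.exists_one_lt_add_inv_eq {R : ℝ} (hR : 2 < R) :
    ∃ x : ℝ, 1 < x ∧ x + x⁻¹ = R := by
  have hdisc : 0 ≤ R ^ 2 - 4 := by nlinarith
  refine ⟨(R + √(R ^ 2 - 4)) / 2, by linarith [Real.sqrt_nonneg (R ^ 2 - 4)], ?_⟩
  have hpos : 0 < R + √(R ^ 2 - 4) := by linarith [Real.sqrt_nonneg (R ^ 2 - 4)]
  field_simp
  linear_combination Real.sq_sqrt hdisc

/-- A real polynomial of degree `6` with positive constant term, palindromic
coefficients (`cᵢ = c_{6-i}`) and coefficients alternating in sign, which has a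
complex root `z` with `Re z ≤ -1`, has a real root `x > 1` with
`x + 1/x > 2 - c₅/c₆`. -/
theorem stmt_4 (p : Polynomial ℝ)
    (hdeg : p.natDegree = 6)
    (h0 : 0 < p.coeff 0)
    (hpal : ∀ i ≤ 6, p.coeff i = p.coeff (6 - i))
    (halt : ∀ i : ℕ, 0 ≤ (-1 : ℝ) ^ i * p.coeff i)
    (z : ℂ) (hz : Polynomial.aeval z p = 0) (hre : z.re ≤ -1) :
    ∃ x : ℝ, p.eval x = 0 ∧ 1 < x ∧ 2 - p.coeff 5 / p.coeff 6 < x + 1 / x := by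
  have hc6 : 0 < p.coeff 6 := hpal 0 (by norm_num) ▸ h0
  have hc5 : p.coeff 5 ≤ 0 := by
    have h5 := halt 5
    norm_num at h5
    exact h5
  have him : z.im ≠ 0 := im_ne_zero_of_aeval_eq_zero
    (fun _ ht => eval_pos_of_nonpos_of_alternating h0 halt ht) hz (by linarith)
  have hz0 : z ≠ 0 := fun h => by simp [h] at him
  have hu := aeval_eq_pow_three_mul_aeval_add_inv_of_palindromic hdeg hpal hz0
  rw [hz, eq_comm, mul_eq_zero, or_iff_right (pow_ne_zero 3 hz0)] at hu
  have hR := eval_neg_div_sub_two_re_eq_zero_of_nonreal_root hc6.ne'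
    (Complex.im_add_inv_ne_zero him hre) hu
  have hgt : 2 - p.coeff 5 / p.coeff 6 < -p.coeff 5 / p.coeff 6 - 2 * (z + z⁻¹).re := by
    linarith [Complex.re_add_inv_lt_neg_one hre, neg_div (p.coeff 6) (p.coeff 5)]
  obtain ⟨x, hx1, hxR⟩ := Real.exists_one_lt_add_inv_eq
    (lt_of_le_of_lt (by linarith [div_nonpos_of_nonpos_of_nonneg hc5 hc6.le]) hgt)
  refine ⟨x, ?_, hx1, by rwa [one_div, hxR]⟩
  rw [← coe_aeval_eq_eval,
    aeval_eq_pow_three_mul_aeval_add_inv_of_palindromic hdeg hpal (by positivity),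
    coe_aeval_eq_eval, hxR, hR, mul_zero]
end

section
/- Let H be a finite multigraph and let H' be obtained from H by a finite sequence of edge-class contractions, where contracting at a pair {u,v} with m_H(u,v) ≥ 1 means merging u and v into a single vertex, deleting all edges joining u and v, and keeping all other edges, with multiplicities of pairs of vertices that become identified being added. Then ind(H') ≤ ind(H). -/
/-- A finite multigraph: a finite vertex set together with a multiplicity
function counting the parallel edges joining two vertices. -/
structure Multigraph (α : Type*) where
  verts : Finset α
  m : α → α → ℕ

namespace Multigraph

variable {α : Type*} [DecidableEq α]

/-- The invariants of a finite multigraph: the multiplicity function is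
symmetric, loopless, and supported on pairs of vertices. -/
def IsGood (G : Multigraph α) : Prop :=
  (∀ u w, G.m u w = G.m w u) ∧ (∀ u, G.m u u = 0) ∧
    (∀ u w, G.m u w ≠ 0 → u ∈ G.verts ∧ w ∈ G.verts)

/-- Star-contraction `G/v`: merge `v` and all of its neighbours into one new
vertex (kept with the name `v`), delete every edge both of whose endpoints lie
in the merged set, and keep all other edges, with endpoints lying in the merged
set redirected to the new vertex (multiplicities of pairs that become
identified are added). -/
def contractStar (G : Multigraph α) (v : α) : Multigraph α where
  verts := insert v (G.verts.filter fun u => u ≠ v ∧ G.m v u = 0)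
  m := fun u w =>
    if u = w then 0
    else if u = v then
      (if G.m v w ≠ 0 then 0
       else ∑ s ∈ G.verts.filter (fun s => G.m v s ≠ 0), G.m s w)
    else if w = v then
      (if G.m v u ≠ 0 then 0
       else ∑ s ∈ G.verts.filter (fun s => G.m v s ≠ 0), G.m s u)
    else if G.m v u ≠ 0 ∨ G.m v w ≠ 0 then 0
    else G.m u w

/-- The simple edges of `G`: ordered pairs of distinct vertices joined by
exactly one edge. -/
def simpleEdges (G : Multigraph α) : Finset (α × α) :=
  (G.verts ×ˢ G.verts).filter fun p => p.1 ≠ p.2 ∧ G.m p.1 p.2 = 1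

/-- Fuel-based recursion computing the Murasugi–Przytycki index; fuel
`G.verts.card` suffices, since a star-contraction at an endpoint of a simple
edge removes at least one vertex. -/
def indAux : ℕ → Multigraph α → ℕ
  | 0, _ => 0
  | n + 1, G =>
      G.simpleEdges.sup fun p =>
        1 + max (indAux n (G.contractStar p.1)) (indAux n (G.contractStar p.2))

/-- The Murasugi–Przytycki index: `ind G = 0` if `G` has no simple edge, and
otherwise `ind G` is the maximum, over all simple edges `{v₁, v₂}` of `G`, of
`1 + max (ind (G/v₁)) (ind (G/v₂))`. -/
def ind (G : Multigraph α) : ℕ := indAux G.verts.card G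

/-- Contraction of the edge class `{u,v}`: merge `u` and `v` into a single
vertex (kept with the name `u`), delete all edges joining `u` and `v`, and
keep all other edges, with multiplicities of pairs of vertices that become
identified being added. -/
def contractEdge (G : Multigraph α) (u v : α) : Multigraph α where
  verts := G.verts.erase v
  m := fun a b =>
    if a = b then 0
    else if a = v ∨ b = v then 0
    else if a = u then G.m u b + G.m v b
    else if b = u then G.m a u + G.m a v
    else G.m a b

/-- One edge-class contraction step, at a pair `{u,v}` of distinct vertices
with `m u v ≥ 1`. -/
def ContractStep (G G' : Multigraph α) : Prop :=
  ∃ u v, u ∈ G.verts ∧ v ∈ G.verts ∧ u ≠ v ∧ 1 ≤ G.m u v ∧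
    G' = G.contractEdge u v

end Multigraph

/-!
`ind G` is the largest `k` for which `G` admits a chain of `k` star-contractions, each taken at
an endpoint of a simple edge of the current graph. Edge-class contractions and star-contractions
are both quotients of `G` by a map collapsing a vertex set onto one of its vertices. A simple
edge of a quotient `G.quot f` lifts to a simple edge `(x, y)` of `G`, since multiplicities of
the quotient are sums of multiplicities of `G`; and the star-contraction of `G.quot f` at `f x`
is itself a quotient of the star-contraction of `G` at `x`, because `f` maps the closed
neighbourhood of `x` into that of `f x`. So every star chain of a quotient lifts to a star chain
of `G` of the same length, and `ind (G.quot f) ≤ ind G`.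
-/

lemma Finset.sum_filter_comp_eq_sum_fiberwise {ι κ β M : Type*} [DecidableEq κ] [DecidableEq β]
    [AddCommMonoid M] (s : Finset ι) (f : ι → κ) (g : κ → β) (b : β) (F : ι → M) :
    ∑ x ∈ s.filter (fun x => g (f x) = b), F x
      = ∑ x' ∈ (s.image f).filter (g · = b), ∑ x ∈ s.filter (f · = x'), F x := by
  have hmaps : ∀ x ∈ s.filter (fun x => g (f x) = b), f x ∈ (s.image f).filter (g · = b) :=
    fun x hx => by
      simp only [Finset.mem_filter] at hx ⊢
      exact ⟨Finset.mem_image_of_mem f hx.1, hx.2⟩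
  rw [← Finset.sum_fiberwise_of_maps_to hmaps]
  refine Finset.sum_congr rfl fun x' hx' => ?_
  rw [Finset.filter_filter]
  refine Finset.sum_congr (Finset.filter_congr fun x _ => ?_) fun _ _ => rfl
  exact ⟨And.right, fun h => ⟨h ▸ (Finset.mem_filter.1 hx').2, h⟩⟩

namespace Multigraph

variable {α : Type*} {G : Multigraph α}

@[ext]
lemma ext {H : Multigraph α} (hverts : G.verts = H.verts) (hm : G.m = H.m) : G = H := by
  cases G; cases H; simp_all

lemma IsGood.m_comm (hG : G.IsGood) (u w : α) : G.m u w = G.m w u := hG.1 u w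

lemma IsGood.m_self (hG : G.IsGood) (u : α) : G.m u u = 0 := hG.2.1 u

lemma IsGood.left_mem (hG : G.IsGood) {u w : α} (h : G.m u w ≠ 0) : u ∈ G.verts :=
  (hG.2.2 u w h).1

lemma IsGood.right_mem (hG : G.IsGood) {u w : α} (h : G.m u w ≠ 0) : w ∈ G.verts :=
  (hG.2.2 u w h).2

variable [DecidableEq α]

lemma mem_simpleEdges {p : α × α} :
    p ∈ G.simpleEdges ↔
      p.1 ∈ G.verts ∧ p.2 ∈ G.verts ∧ p.1 ≠ p.2 ∧ G.m p.1 p.2 = 1 := by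
  simp [simpleEdges, and_assoc]

lemma IsGood.swap_mem_simpleEdges (hG : G.IsGood) {p : α × α} (hp : p ∈ G.simpleEdges) :
    p.swap ∈ G.simpleEdges := by
  obtain ⟨h1, h2, h3, h4⟩ := mem_simpleEdges.1 hp
  exact mem_simpleEdges.2 ⟨h2, h1, h3.symm, hG.m_comm p.2 p.1 ▸ h4⟩

def quot (G : Multigraph α) (f : α → α) : Multigraph α where
  verts := G.verts.image f
  m a b :=
    if a = b then 0
    else ∑ x ∈ G.verts.filter (f · = a), ∑ y ∈ G.verts.filter (f · = b), G.m x y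

lemma quot_m_self (f : α → α) (a : α) : (G.quot f).m a a = 0 := if_pos rfl

lemma quot_m_of_ne (f : α → α) {a b : α} (hab : a ≠ b) :
    (G.quot f).m a b =
      ∑ x ∈ G.verts.filter (f · = a), ∑ y ∈ G.verts.filter (f · = b), G.m x y :=
  if_neg hab

lemma IsGood.quot (hG : G.IsGood) (f : α → α) : (G.quot f).IsGood := by
  refine ⟨fun u w => ?_, fun u => quot_m_self f u, fun u w h => ?_⟩
  · rcases eq_or_ne u w with rfl | huw
    · rfl
    rw [quot_m_of_ne f huw, quot_m_of_ne f huw.symm, Finset.sum_comm]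
    exact Finset.sum_congr rfl fun y _ => Finset.sum_congr rfl fun x _ => hG.m_comm x y
  · have huw : u ≠ w := by rintro rfl; simp [Multigraph.quot] at h
    rw [quot_m_of_ne f huw] at h
    obtain ⟨x, hx, hx0⟩ := Finset.exists_ne_zero_of_sum_ne_zero h
    obtain ⟨y, hy, -⟩ := Finset.exists_ne_zero_of_sum_ne_zero hx0
    simp only [Finset.mem_filter] at hx hy
    exact ⟨Finset.mem_image.2 ⟨x, hx⟩, Finset.mem_image.2 ⟨y, hy⟩⟩

lemma m_le_quot_m {f : α → α} {x y : α} (hx : x ∈ G.verts) (hy : y ∈ G.verts)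
    (hxy : f x ≠ f y) : G.m x y ≤ (G.quot f).m (f x) (f y) := by
  rw [quot_m_of_ne f hxy]
  have hx' : x ∈ G.verts.filter (f · = f x) := Finset.mem_filter.2 ⟨hx, rfl⟩
  have hy' : y ∈ G.verts.filter (f · = f y) := Finset.mem_filter.2 ⟨hy, rfl⟩
  calc G.m x y ≤ ∑ y' ∈ G.verts.filter (f · = f y), G.m x y' :=
        Finset.single_le_sum (fun _ _ => Nat.zero_le _) hy'
    _ ≤ _ := Finset.single_le_sum (f := fun x' => ∑ y' ∈ _, G.m x' y')
        (fun _ _ => Nat.zero_le _) hx'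

lemma exists_simpleEdge_of_mem_simpleEdges_quot {f : α → α} {a c : α}
    (h : (a, c) ∈ (G.quot f).simpleEdges) :
    ∃ x y, (x, y) ∈ G.simpleEdges ∧ f x = a ∧ f y = c := by
  obtain ⟨-, -, hac, h1⟩ := mem_simpleEdges.1 h
  dsimp only at hac h1
  obtain ⟨x, hx, hx0⟩ := Finset.exists_ne_zero_of_sum_ne_zero
    ((quot_m_of_ne f hac).symm.trans h1 ▸ one_ne_zero)
  obtain ⟨y, hy, hy0⟩ := Finset.exists_ne_zero_of_sum_ne_zero hx0
  obtain ⟨hxV, rfl⟩ := Finset.mem_filter.1 hx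
  obtain ⟨hyV, rfl⟩ := Finset.mem_filter.1 hy
  have hle : G.m x y ≤ 1 := (m_le_quot_m hxV hyV hac).trans h1.le
  exact ⟨x, y, mem_simpleEdges.2 ⟨hxV, hyV, fun h => hac (congrArg f h),
    le_antisymm hle (Nat.one_le_iff_ne_zero.2 hy0)⟩, rfl, rfl⟩

lemma quot_congr {f₁ f₂ : α → α} (h : ∀ x ∈ G.verts, f₁ x = f₂ x) :
    G.quot f₁ = G.quot f₂ := by
  have hfib : ∀ a, G.verts.filter (f₁ · = a) = G.verts.filter (f₂ · = a) :=
    fun a => Finset.filter_congr fun x hx => by rw [h x hx]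
  simp only [Multigraph.quot, Finset.image_congr h, hfib]

lemma quot_quot (f g : α → α) : (G.quot f).quot g = G.quot (g ∘ f) := by
  simp only [Multigraph.quot, mk.injEq, Finset.image_image, true_and]
  funext a b
  split_ifs with hab
  · rfl
  simp only [Function.comp, Finset.sum_filter_comp_eq_sum_fiberwise G.verts f g a]
  refine Finset.sum_congr rfl fun x' hx' => ?_
  calc _ = ∑ y' ∈ (G.verts.image f).filter (g · = b), ∑ x ∈ G.verts.filter (f · = x'),
        ∑ y ∈ G.verts.filter (f · = y'), G.m x y :=
        Finset.sum_congr rfl fun y' hy' => if_neg <| by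
          rintro rfl
          exact hab ((Finset.mem_filter.1 hx').2.symm.trans (Finset.mem_filter.1 hy').2)
    _ = _ := by
      rw [Finset.sum_comm]
      simp only [Finset.sum_filter_comp_eq_sum_fiberwise G.verts f g b]

def merge (S : Finset α) (r : α) (x : α) : α := if x ∈ S then r else x

section merge

variable {S : Finset α} {r : α}

lemma image_merge (hS : S ⊆ G.verts) (hr : r ∈ S) :
    G.verts.image (merge S r) = insert r (G.verts \ S) := by
  ext z
  simp only [Finset.mem_image, Finset.mem_insert, Finset.mem_sdiff, merge]
  constructor
  · rintro ⟨x, hx, rfl⟩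
    split_ifs with h
    · exact Or.inl rfl
    · exact Or.inr ⟨hx, h⟩
  · rintro (rfl | ⟨hz, hzS⟩)
    · exact ⟨_, hS hr, if_pos hr⟩
    · exact ⟨z, hz, if_neg hzS⟩

lemma sum_filter_merge_eq (hS : S ⊆ G.verts) (hr : r ∈ S) (a : α) {F : α → ℕ}
    (hF : ∀ x ∉ G.verts, F x = 0) :
    ∑ x ∈ G.verts.filter (merge S r · = a), F x
      = if a = r then ∑ x ∈ S, F x else if a ∈ S then 0 else F a := by
  split_ifs with har haS
  · subst a
    refine Finset.sum_congr (Finset.ext fun x => ?_) fun _ _ => rfl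
    rw [Finset.mem_filter, merge]
    split_ifs with hx
    · exact ⟨fun _ => hx, fun _ => ⟨hS hx, rfl⟩⟩
    · exact ⟨fun h => absurd (h.2 ▸ hr) hx, fun h => absurd h hx⟩
  · refine Finset.sum_eq_zero fun x hx => absurd (Finset.mem_filter.1 hx).2 ?_
    unfold merge
    split_ifs with hxS
    · exact Ne.symm har
    · rintro rfl; exact hxS haS
  · have hfib : G.verts.filter (merge S r · = a) = G.verts.filter (· = a) :=
      Finset.filter_congr fun x _ => by
        unfold merge
        split_ifs with hx
        · exact ⟨fun h => absurd h.symm har, fun h => absurd (h ▸ hx) haS⟩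
        · rfl
    rw [hfib, Finset.filter_eq', apply_ite (∑ x ∈ ·, F x)]
    simp only [Finset.sum_singleton, Finset.sum_empty, ite_eq_left_iff]
    exact fun ha => (hF a ha).symm

lemma quot_merge_m (hG : G.IsGood) (hS : S ⊆ G.verts) (hr : r ∈ S) {a b : α} (hab : a ≠ b) :
    (G.quot (merge S r)).m a b =
      let g x := if b = r then ∑ y ∈ S, G.m x y else if b ∈ S then 0 else G.m x b
      if a = r then ∑ x ∈ S, g x else if a ∈ S then 0 else g a := by
  rw [quot_m_of_ne _ hab]
  simp only [sum_filter_merge_eq hS hr b (fun y hy => by_contra fun h => hy (hG.right_mem h))]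
  refine sum_filter_merge_eq hS hr a fun x hx => ?_
  have hx0 : ∀ y, G.m x y = 0 := fun y => by_contra fun h => hx (hG.left_mem h)
  simp [hx0]

end merge

lemma contractEdge_eq_quot (hG : G.IsGood) {u v : α} (hu : u ∈ G.verts) (hv : v ∈ G.verts)
    (huv : u ≠ v) : G.contractEdge u v = G.quot (merge {u, v} u) := by
  have hS : {u, v} ⊆ G.verts := Finset.insert_subset hu (Finset.singleton_subset_iff.2 hv)
  have hr : u ∈ ({u, v} : Finset α) := Finset.mem_insert_self u {v}
  ext1
  · rw [Multigraph.quot, image_merge hS hr]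
    ext x
    by_cases hxu : x = u <;> simp [contractEdge, hxu, huv, hu, and_comm]
  funext a b
  rcases eq_or_ne a b with rfl | hab
  · simp [contractEdge, quot_m_self]
  rw [quot_merge_m hG hS hr hab]
  simp only [contractEdge, if_neg hab, Finset.sum_pair huv, Finset.mem_insert,
    Finset.mem_singleton]
  split_ifs <;> simp_all

def closedNbhd (G : Multigraph α) (v : α) : Finset α :=
  insert v (G.verts.filter (G.m v · ≠ 0))

lemma mem_closedNbhd_self (v : α) : v ∈ G.closedNbhd v := Finset.mem_insert_self _ _

lemma IsGood.mem_closedNbhd (hG : G.IsGood) {v x : α} :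
    x ∈ G.closedNbhd v ↔ x = v ∨ G.m v x ≠ 0 := by
  simp only [closedNbhd, Finset.mem_insert, Finset.mem_filter]
  exact or_congr_right ⟨And.right, fun h => ⟨hG.right_mem h, h⟩⟩

lemma closedNbhd_subset {v : α} (hv : v ∈ G.verts) : G.closedNbhd v ⊆ G.verts :=
  Finset.insert_subset hv (Finset.filter_subset _ _)

lemma sum_closedNbhd (hG : G.IsGood) (v : α) (F : α → ℕ) :
    ∑ x ∈ G.closedNbhd v, F x = F v + ∑ x ∈ G.verts.filter (G.m v · ≠ 0), F x :=
  Finset.sum_insert fun h => (Finset.mem_filter.1 h).2 (hG.m_self v)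

lemma contractStar_eq_quot (hG : G.IsGood) {v : α} (hv : v ∈ G.verts) :
    G.contractStar v = G.quot (merge (G.closedNbhd v) v) := by
  have hS := closedNbhd_subset hv
  have hr := G.mem_closedNbhd_self v
  ext1
  · rw [Multigraph.quot, image_merge hS hr]
    ext x
    simp only [contractStar, Finset.mem_insert, Finset.mem_filter, Finset.mem_sdiff,
      hG.mem_closedNbhd]
    tauto
  funext a b
  rcases eq_or_ne a b with rfl | hab
  · simp [contractStar, quot_m_self]
  rw [quot_merge_m hG hS hr hab]
  simp only [contractStar, if_neg hab, sum_closedNbhd hG, hG.mem_closedNbhd]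
  split_ifs <;> simp_all [hG.m_comm a]

lemma IsGood.contractStar (hG : G.IsGood) {v : α} (hv : v ∈ G.verts) :
    (G.contractStar v).IsGood :=
  contractStar_eq_quot hG hv ▸ hG.quot _

lemma card_contractStar_lt {p : α × α} (hp : p ∈ G.simpleEdges) :
    (G.contractStar p.1).verts.card < G.verts.card := by
  obtain ⟨h1, h2, h12, hm⟩ := mem_simpleEdges.1 hp
  refine Finset.card_lt_card ⟨Finset.insert_subset h1 (Finset.filter_subset _ _), fun h => ?_⟩
  have h2' := h h2
  simp only [Multigraph.contractStar, Finset.mem_insert, Finset.mem_filter] at h2'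
  rcases h2' with h | ⟨-, -, h⟩ <;> simp_all

lemma contractStar_quot (hG : G.IsGood) (f : α → α) {x : α} (hx : x ∈ G.verts) :
    (G.quot f).contractStar (f x)
      = (G.contractStar x).quot (merge ((G.quot f).closedNbhd (f x)) (f x) ∘ f) := by
  have hQ := hG.quot f
  rw [contractStar_eq_quot hQ (Finset.mem_image_of_mem f hx), contractStar_eq_quot hG hx,
    quot_quot, quot_quot]
  refine quot_congr fun t ht => ?_
  simp only [Function.comp_apply]
  by_cases htx : t ∈ G.closedNbhd x
  · have hft : f t ∈ (G.quot f).closedNbhd (f x) := by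
      rw [hQ.mem_closedNbhd]
      by_contra! h
      rcases hG.mem_closedNbhd.1 htx with rfl | hm
      · exact h.1 rfl
      · exact hm (Nat.le_zero.1 (h.2 ▸ m_le_quot_m hx ht (Ne.symm h.1)))
    simp only [merge, htx, hft, mem_closedNbhd_self, if_true]
  · simp only [merge, htx, if_false]

def StarChain : ℕ → Multigraph α → Prop
  | 0, _ => True
  | k + 1, G => ∃ p ∈ G.simpleEdges, StarChain k (G.contractStar p.1)

lemma StarChain.of_quot {k : ℕ} (hG : G.IsGood) (f : α → α)
    (h : StarChain k (G.quot f)) : StarChain k G := by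
  induction k generalizing G f with
  | zero => trivial
  | succ k ih =>
    obtain ⟨⟨a, c⟩, hp, hchain⟩ := h
    obtain ⟨x, y, hxy, rfl, rfl⟩ := exists_simpleEdge_of_mem_simpleEdges_quot hp
    have hx := (mem_simpleEdges.1 hxy).1
    rw [contractStar_quot hG f hx] at hchain
    exact ⟨(x, y), hxy, ih (hG.contractStar hx) _ hchain⟩

lemma starChain_iff_le_indAux {n k : ℕ} (hG : G.IsGood) (hn : G.verts.card ≤ n) :
    StarChain k G ↔ k ≤ indAux n G := by
  induction n generalizing G k with
  | zero =>
    have hE : G.simpleEdges = ∅ := by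
      simp [simpleEdges, Finset.card_eq_zero.1 (Nat.le_zero.1 hn)]
    cases k <;> simp [StarChain, indAux, hE]
  | succ n ih =>
    cases k with
    | zero => simp [StarChain]
    | succ k =>
      have key : ∀ p ∈ G.simpleEdges,
          StarChain k (G.contractStar p.1) ↔ k ≤ indAux n (G.contractStar p.1) := fun p hp =>
        ih (hG.contractStar (mem_simpleEdges.1 hp).1) (by have := card_contractStar_lt hp; omega)
      rw [StarChain, indAux, Finset.le_sup_iff (by simp)]
      simp only [add_comm 1, add_le_add_iff_right, le_max_iff]
      constructor
      · rintro ⟨p, hp, h⟩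
        exact ⟨p, hp, .inl ((key p hp).1 h)⟩
      · rintro ⟨p, hp, h | h⟩
        · exact ⟨p, hp, (key p hp).2 h⟩
        · exact ⟨p.swap, hG.swap_mem_simpleEdges hp, (key _ (hG.swap_mem_simpleEdges hp)).2 h⟩

lemma starChain_iff_le_ind {k : ℕ} (hG : G.IsGood) : StarChain k G ↔ k ≤ G.ind :=
  starChain_iff_le_indAux hG le_rfl

theorem ind_quot_le (hG : G.IsGood) (f : α → α) : (G.quot f).ind ≤ G.ind :=
  (starChain_iff_le_ind hG).1 (.of_quot hG f ((starChain_iff_le_ind (hG.quot f)).2 le_rfl))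

end Multigraph

/-- If `H'` is obtained from a finite multigraph `H` by a finite sequence of
edge-class contractions, then `ind H' ≤ ind H`. -/
theorem stmt_8 {α : Type*} [DecidableEq α] (H H' : Multigraph α)
    (hH : H.IsGood)
    (h : Relation.ReflTransGen Multigraph.ContractStep H H') :
    H'.ind ≤ H.ind := by
  induction h using Relation.ReflTransGen.head_induction_on with
  | refl => exact le_rfl
  | head hstep _ ih =>
    obtain ⟨u, v, hu, hv, huv, -, rfl⟩ := hstep
    rw [Multigraph.contractEdge_eq_quot hH hu hv huv] at ih
    exact (ih (hH.quot _)).trans (Multigraph.ind_quot_le hH _)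
end

section
/- Let G be a finite multigraph and {u,w} a pair of distinct vertices with m_G(u,w) ≥ 1. Let G̃ be the finite multigraph obtained from G by decreasing m(u,w) by one and adding two new vertices x and y together with three new simple edges {u,x}, {x,y} and {y,w} (that is, one edge joining u and w is subdivided twice). Then ind(G̃) ≥ ind(G) + 1. -/
namespace Multigraph

variable {α : Type*} [DecidableEq α]

/-- Subdivide one `u`–`w` edge twice: decrease `m u w` by one, and add two new
vertices `x`, `y` together with three new simple edges `{u,x}`, `{x,y}` and
`{y,w}`. -/
def subdivide2 (G : Multigraph α) (u w x y : α) : Multigraph α where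
  verts := insert x (insert y G.verts)
  m := fun a b =>
    if a = b then 0
    else if (a = u ∧ b = w) ∨ (a = w ∧ b = u) then G.m u w - 1
    else if (a = u ∧ b = x) ∨ (a = x ∧ b = u) then 1
    else if (a = x ∧ b = y) ∨ (a = y ∧ b = x) then 1
    else if (a = y ∧ b = w) ∨ (a = w ∧ b = y) then 1
    else if a = x ∨ b = x ∨ a = y ∨ b = y then 0
    else G.m a b

end Multigraph

lemma Finset.image_swap_eq_insert_erase {α : Type*} [DecidableEq α] {s : Finset α} {u x : α}
    (hu : u ∈ s) (hx : x ∉ s) : s.image (Equiv.swap u x) = insert x (s.erase u) := by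
  conv_lhs => rw [← Finset.insert_erase hu]
  rw [Finset.image_insert, Equiv.swap_apply_left]
  congr 1
  refine (Finset.image_congr fun z hz => ?_).trans Finset.image_id
  exact Equiv.swap_apply_of_ne_of_ne (Finset.ne_of_mem_erase hz)
    (ne_of_mem_of_not_mem (Finset.mem_of_mem_erase hz) hx)

namespace Multigraph

variable {α : Type*} [DecidableEq α]

lemma indAux_le_indAux_succ (n : ℕ) (G : Multigraph α) : indAux n G ≤ indAux (n + 1) G := by
  induction n generalizing G with
  | zero => exact Nat.zero_le _
  | succ n ih =>
    rw [indAux, indAux]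
    exact Finset.sup_mono_fun fun p _ => by
      gcongr <;> apply ih

lemma monotone_indAux (G : Multigraph α) : Monotone (indAux · G) :=
  monotone_nat_of_le_succ fun n => indAux_le_indAux_succ n G

lemma one_add_indAux_contractStar_fst_le {G : Multigraph α} {p : α × α}
    (hp : p ∈ G.simpleEdges) (n : ℕ) :
    1 + indAux n (G.contractStar p.1) ≤ indAux (n + 1) G :=
  (Nat.add_le_add_left (le_max_left _ _) 1).trans
    (Finset.le_sup (f := fun p : α × α =>
      1 + max (indAux n (G.contractStar p.1)) (indAux n (G.contractStar p.2))) hp)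

lemma mem_verts_of_mem_simpleEdges {G : Multigraph α} {p : α × α} (hp : p ∈ G.simpleEdges) :
    p.1 ∈ G.verts ∧ p.2 ∈ G.verts :=
  Finset.mem_product.1 (Finset.mem_filter.1 hp).1

lemma contractStar_m_center_left (G : Multigraph α) {v c : α} (hcv : c ≠ v) (hvc : G.m v c = 0) :
    (G.contractStar v).m v c = ∑ s ∈ G.verts.filter (fun s => G.m v s ≠ 0), G.m s c := by
  simp [contractStar, hcv.symm, hvc]

lemma contractStar_m_center_right (G : Multigraph α) {v c : α} (hcv : c ≠ v) (hvc : G.m v c = 0) :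
    (G.contractStar v).m c v = ∑ s ∈ G.verts.filter (fun s => G.m v s ≠ 0), G.m s c := by
  simp [contractStar, hcv, hvc]

lemma contractStar_m_of_ne (G : Multigraph α) {v a b : α} (hav : a ≠ v) (hbv : b ≠ v)
    (hva : G.m v a = 0) (hvb : G.m v b = 0) :
    (G.contractStar v).m a b = if a = b then 0 else G.m a b := by
  simp [contractStar, hav, hbv, hva, hvb]

structure IsRelabelling (e : α ≃ α) (G H : Multigraph α) : Prop where
  verts_eq : H.verts = G.verts.image e
  m_apply : ∀ a ∈ G.verts, ∀ b ∈ G.verts, H.m (e a) (e b) = G.m a b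

namespace IsRelabelling

variable {e : α ≃ α} {G H : Multigraph α}

lemma simpleEdges_eq (h : IsRelabelling e G H) :
    H.simpleEdges = G.simpleEdges.image (Prod.map e e) := by
  rw [simpleEdges, simpleEdges, h.verts_eq, ← Finset.prodMap_image_product, Finset.filter_image]
  congr 1
  refine Finset.filter_congr fun p hp => ?_
  rw [Finset.mem_product] at hp
  simp [h.m_apply p.1 hp.1 p.2 hp.2]

lemma contractStar (h : IsRelabelling e G H) {v : α} (hv : v ∈ G.verts) :
    IsRelabelling e (G.contractStar v) (H.contractStar (e v)) where
  verts_eq := by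
    simp only [Multigraph.contractStar, h.verts_eq, Finset.image_insert, Finset.filter_image]
    congr 2
    refine Finset.filter_congr fun z hz => ?_
    simp [h.m_apply v hv z hz]
  m_apply := by
    have hsub : (G.contractStar v).verts ⊆ G.verts :=
      Finset.insert_subset hv (Finset.filter_subset _ _)
    have hsum : ∀ c ∈ G.verts,
        ∑ s ∈ H.verts.filter (fun s => H.m (e v) s ≠ 0), H.m s (e c) =
          ∑ s ∈ G.verts.filter (fun s => G.m v s ≠ 0), G.m s c := by
      intro c hc
      rw [h.verts_eq, Finset.filter_image, Finset.sum_image e.injective.injOn]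
      refine Finset.sum_congr ?_ fun s hs => h.m_apply s (Finset.mem_filter.1 hs).1 c hc
      exact Finset.filter_congr fun s hs => by rw [h.m_apply v hv s hs]
    intro a ha b hb
    simp only [Multigraph.contractStar, e.apply_eq_iff_eq, h.m_apply v hv a (hsub ha),
      h.m_apply v hv b (hsub hb), h.m_apply a (hsub ha) b (hsub hb), hsum a (hsub ha),
      hsum b (hsub hb)]

lemma indAux_eq (n : ℕ) (h : IsRelabelling e G H) : indAux n H = indAux n G := by
  induction n generalizing G H with
  | zero => rfl
  | succ n ih =>
    rw [indAux, indAux, h.simpleEdges_eq, Finset.sup_image]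
    refine Finset.sup_congr rfl fun p hp => ?_
    have hp' := mem_verts_of_mem_simpleEdges hp
    simp only [Function.comp_apply, Prod.map_fst, Prod.map_snd, ih (h.contractStar hp'.1),
      ih (h.contractStar hp'.2)]

end IsRelabelling

section Subdivide2

variable {G : Multigraph α} {u w x y : α}

lemma subdivide2_verts :
    (G.subdivide2 u w x y).verts = insert x (insert y G.verts) := rfl

lemma subdivide2_m_x (hxu : x ≠ u) (hxw : x ≠ w) (hxy : x ≠ y) (z : α) :
    (G.subdivide2 u w x y).m x z = if z = u ∨ z = y then 1 else 0 := by
  simp only [subdivide2]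
  split_ifs <;> simp_all

lemma subdivide2_m_u_add_m_y (huw : u ≠ w) (hux : u ≠ x) (huy : u ≠ y) (hyw : y ≠ w)
    (hm : 1 ≤ G.m u w) {b : α} (hbu : b ≠ u) (hbx : b ≠ x) (hby : b ≠ y) :
    (G.subdivide2 u w x y).m u b + (G.subdivide2 u w x y).m y b = G.m u b := by
  simp only [subdivide2]
  split_ifs <;> simp_all

lemma subdivide2_m_of_ne {a b : α} (hau : a ≠ u) (hax : a ≠ x) (hay : a ≠ y)
    (hbu : b ≠ u) (hbx : b ≠ x) (hby : b ≠ y) (hab : a ≠ b) :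
    (G.subdivide2 u w x y).m a b = G.m a b := by
  simp only [subdivide2]
  split_ifs <;> simp_all

lemma neighbors_x_subdivide2 (hu : u ∈ G.verts) (hxu : x ≠ u) (hxw : x ≠ w) (hxy : x ≠ y) :
    (G.subdivide2 u w x y).verts.filter (fun s => (G.subdivide2 u w x y).m x s ≠ 0) = {u, y} := by
  ext z
  simp only [Finset.mem_filter, subdivide2_m_x hxu hxw hxy, subdivide2_verts, Finset.mem_insert,
    Finset.mem_singleton]
  constructor
  · intro hz; by_contra hne; simp_all
  · rintro (rfl | rfl) <;> simp [hu]

lemma mk_mem_simpleEdges_subdivide2 (hxu : x ≠ u) (hxw : x ≠ w) (hxy : x ≠ y) :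
    (x, y) ∈ (G.subdivide2 u w x y).simpleEdges := by
  simp [simpleEdges, subdivide2_verts, subdivide2_m_x hxu hxw hxy, hxy]

lemma isRelabelling_contractStar_subdivide2 (hG : G.IsGood) (huw : u ≠ w) (hu : u ∈ G.verts)
    (hw : w ∈ G.verts) (hm : 1 ≤ G.m u w) (hxy : x ≠ y) (hx : x ∉ G.verts) (hy : y ∉ G.verts) :
    IsRelabelling (Equiv.swap u x) G ((G.subdivide2 u w x y).contractStar x) := by
  have hxu : x ≠ u := ne_of_mem_of_not_mem hu hx |>.symm
  have hxw : x ≠ w := ne_of_mem_of_not_mem hw hx |>.symm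
  have hyu : y ≠ u := ne_of_mem_of_not_mem hu hy |>.symm
  have hyw : y ≠ w := ne_of_mem_of_not_mem hw hy |>.symm
  have hmx := subdivide2_m_x (G := G) hxu hxw hxy
  have hmx_of_mem : ∀ c ∈ G.verts, c ≠ u → (G.subdivide2 u w x y).m x c = 0 := fun c hc hcu => by
    simp [hmx, hcu, ne_of_mem_of_not_mem hc hy]
  constructor
  · rw [Finset.image_swap_eq_insert_erase hu hx]
    simp only [contractStar]
    congr 1
    ext z
    simp only [Finset.mem_filter, subdivide2_verts, hmx, Finset.mem_insert, Finset.mem_erase]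
    grind
  · have hsum : ∀ c ∈ G.verts, c ≠ u → ∑ s ∈ (G.subdivide2 u w x y).verts.filter
        (fun s => (G.subdivide2 u w x y).m x s ≠ 0), (G.subdivide2 u w x y).m s c = G.m u c := by
      intro c hc hcu
      rw [neighbors_x_subdivide2 hu hxu hxw hxy, Finset.sum_pair hyu.symm,
        subdivide2_m_u_add_m_y huw hxu.symm hyu.symm hyw hm hcu (ne_of_mem_of_not_mem hc hx)
          (ne_of_mem_of_not_mem hc hy)]
    have hswap : ∀ c ∈ G.verts, c ≠ u → Equiv.swap u x c = c := fun c hc hcu =>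
      Equiv.swap_apply_of_ne_of_ne hcu (ne_of_mem_of_not_mem hc hx)
    intro a ha b hb
    have hax := ne_of_mem_of_not_mem ha hx
    have hbx := ne_of_mem_of_not_mem hb hx
    obtain rfl | hau := eq_or_ne a u
    · obtain rfl | hbu := eq_or_ne b a
      · simp [contractStar, hG.2.1]
      · rw [Equiv.swap_apply_left, hswap b hb hbu,
          contractStar_m_center_left _ hbx (hmx_of_mem b hb hbu), hsum b hb hbu]
    · obtain rfl | hbu := eq_or_ne b u
      · rw [Equiv.swap_apply_left, hswap a ha hau,
          contractStar_m_center_right _ hax (hmx_of_mem a ha hau), hsum a ha hau, hG.1]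
      · rw [hswap a ha hau, hswap b hb hbu,
          contractStar_m_of_ne _ hax hbx (hmx_of_mem a ha hau) (hmx_of_mem b hb hbu)]
        split_ifs with hab
        · rw [hab, hG.2.1]
        · exact subdivide2_m_of_ne hau hax (ne_of_mem_of_not_mem ha hy) hbu hbx
            (ne_of_mem_of_not_mem hb hy) hab

end Subdivide2

end Multigraph

/-- If `G̃` is obtained from a finite multigraph `G` by subdividing twice an
edge joining `u` and `w` (using fresh vertices `x`, `y`), then
`ind G̃ ≥ ind G + 1`. -/
theorem stmt_9 {α : Type*} [DecidableEq α] (G : Multigraph α) (hG : G.IsGood)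
    (u w x y : α) (huw : u ≠ w) (hu : u ∈ G.verts) (hw : w ∈ G.verts)
    (hm : 1 ≤ G.m u w) (hxy : x ≠ y) (hx : x ∉ G.verts) (hy : y ∉ G.verts) :
    G.ind + 1 ≤ (G.subdivide2 u w x y).ind := by
  have hcard : (G.subdivide2 u w x y).verts.card = G.verts.card + 1 + 1 := by
    rw [Multigraph.subdivide2_verts, Finset.card_insert_of_notMem (by simp [hxy, hx]),
      Finset.card_insert_of_notMem hy]
  have hsimple : (x, y) ∈ (G.subdivide2 u w x y).simpleEdges :=
    Multigraph.mk_mem_simpleEdges_subdivide2 (ne_of_mem_of_not_mem hu hx).symm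
      (ne_of_mem_of_not_mem hw hx).symm hxy
  have hrelabel := Multigraph.isRelabelling_contractStar_subdivide2 hG huw hu hw hm hxy hx hy
  calc G.ind + 1 = 1 + Multigraph.indAux G.verts.card G := add_comm _ _
    _ ≤ 1 + Multigraph.indAux (G.verts.card + 1) G := by
      gcongr; exact Multigraph.monotone_indAux G (Nat.le_succ _)
    _ = 1 + Multigraph.indAux (G.verts.card + 1) ((G.subdivide2 u w x y).contractStar x) := by
      rw [hrelabel.indAux_eq]
    _ ≤ (G.subdivide2 u w x y).ind := by
      rw [Multigraph.ind, hcard]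
      exact Multigraph.one_add_indAux_contractStar_fst_le hsimple _
end

section
/- Let n ≥ 2 and let G be a group containing elements s₁, …, s_{n-1} satisfying the commutation relations s_i s_j = s_j s_i whenever |i - j| ≥ 2, and the Yang–Baxter (braid) relations s_i s_{i+1} s_i = s_{i+1} s_i s_{i+1} for 1 ≤ i ≤ n-2. For 1 ≤ i < j ≤ n define the band a_{i,j} := (s_i s_{i+1} ⋯ s_{j-2}) · s_{j-1} · (s_i s_{i+1} ⋯ s_{j-2})⁻¹ (the conjugating product being empty when j = i+1, so that a_{i,i+1} = s_i), and for 1 ≤ k ≤ n-1 set γ_k := s₁ s₂ ⋯ s_k. Let τ_k : {1,…,n} → {1,…,n} be the cycle defined by τ_k(i) = i+1 for 1 ≤ i ≤ k, τ_k(k+1) = 1, and τ_k(i) = i for i > k+1. Then for all 1 ≤ k ≤ n-1 and all 1 ≤ i < j ≤ n such that it is NOT the case that i < k+1 < j, one has γ_k · a_{i,j} = a_{i',j'} · γ_k, where {i', j'} = {τ_k(i), τ_k(j)} with i' < j'. -/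
/-- The word `s_i s_{i+1} ⋯ s_{j-2}` (the empty product when `j = i + 1`). -/
def bandConj {G : Type*} [Group G] (s : ℕ → G) (i j : ℕ) : G :=
  ((List.range' i (j - 1 - i)).map s).prod

/-- The band `a_{i,j} = (s_i s_{i+1} ⋯ s_{j-2}) · s_{j-1} · (s_i s_{i+1} ⋯ s_{j-2})⁻¹`,
so that `a_{i,i+1} = s_i`. -/
def band {G : Type*} [Group G] (s : ℕ → G) (i j : ℕ) : G :=
  bandConj s i j * s (j - 1) * (bandConj s i j)⁻¹

/-- The word `γ_k = s₁ s₂ ⋯ s_k`. -/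
def gammaWord {G : Type*} [Group G] (s : ℕ → G) (k : ℕ) : G :=
  ((List.range' 1 k).map s).prod

/-- The cycle `τ_k`: `τ_k(i) = i + 1` for `1 ≤ i ≤ k`, `τ_k(k+1) = 1`, and
`τ_k(i) = i` for `i > k + 1`. -/
def tauCycle (k i : ℕ) : ℕ :=
  if 1 ≤ i ∧ i ≤ k then i + 1 else if i = k + 1 then 1 else i

/-!
For `1 ≤ m < k` the braid relation at `m`, together with far commutativity, gives
`γ_k s_m = s_{m+1} γ_k`, while `γ_k` commutes with every `s_m` with `m ≥ k + 2`. Hence a band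
inside `{1, …, k}` is shifted up by one and a band beyond `k + 1` is fixed; a band `a_{k+1,j}`
becomes `a_{1,j}` because its conjugating word is `γ_k` followed by that of `a_{k+1,j}`.
In the remaining case `a_{i,k+1}` the braid relation gives `s_{q-1} a_{i,q} = a_{i,q-1} s_{q-1}`,
so `s_{i+1} ⋯ s_k` carries `a_{i,k+1}` to `a_{i,i+1} = s_i`, and writing
`γ_k = (s_1 ⋯ s_{i-1}) s_i (s_{i+1} ⋯ s_k)` turns this into `γ_k a_{i,k+1} = a_{1,i+1} γ_k`.
-/

theorem SemiconjBy.list_map_prod {M ι : Type*} [Monoid M] {g : M} {f f' : ι → M} (l : List ι)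
    (h : ∀ x ∈ l, SemiconjBy g (f x) (f' x)) : SemiconjBy g (l.map f).prod (l.map f').prod := by
  induction l with
  | nil => exact SemiconjBy.one_right g
  | cons x l ih =>
    simp only [List.map_cons, List.prod_cons]
    exact (h x List.mem_cons_self).mul_right (ih fun y hy => h y (List.mem_cons_of_mem x hy))

theorem List.prod_map_range'_add {M : Type*} [Monoid M] (f : ℕ → M) (a b c : ℕ) :
    ((List.range' a (b + c)).map f).prod =
      ((List.range' a b).map f).prod * ((List.range' (a + b) c).map f).prod := by
  rw [← List.range'_append_1, List.map_append, List.prod_append]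

theorem tauCycle_of_le {k i : ℕ} (hi : 1 ≤ i) (hik : i ≤ k) : tauCycle k i = i + 1 := by
  simp [tauCycle, hi, hik]

theorem tauCycle_succ_self (k : ℕ) : tauCycle k (k + 1) = 1 := by
  simp [tauCycle]

theorem tauCycle_of_lt {k i : ℕ} (hki : k + 1 < i) : tauCycle k i = i := by
  unfold tauCycle
  split_ifs <;> omega

section Braid

variable {G : Type*} [Group G] {s : ℕ → G}

theorem semiconjBy_band {g : G} {i j i' j' : ℕ}
    (hc : SemiconjBy g (bandConj s i j) (bandConj s i' j'))
    (hx : SemiconjBy g (s (j - 1)) (s (j' - 1))) :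
    SemiconjBy g (band s i j) (band s i' j') :=
  (hc.mul_right hx).mul_right hc.inv_right

theorem band_succ (s : ℕ → G) (i : ℕ) : band s i (i + 1) = s i := by
  simp [band, bandConj]

theorem bandConj_succ (s : ℕ → G) {p m : ℕ} (hpm : p ≤ m) :
    bandConj s p (m + 2) = bandConj s p (m + 1) * s m := by
  obtain ⟨r, rfl⟩ := Nat.exists_eq_add_of_le hpm
  rw [bandConj, bandConj, show p + r + 2 - 1 - p = r + 1 by omega,
    show p + r + 1 - 1 - p = r by omega, List.range'_1_concat, List.map_append, List.prod_append]
  simp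

theorem bandConj_one (s : ℕ → G) {k j : ℕ} (hkj : k + 1 < j) :
    bandConj s 1 j = gammaWord s k * bandConj s (k + 1) j := by
  rw [bandConj, bandConj, gammaWord, show j - 1 - 1 = k + (j - 1 - (k + 1)) by omega,
    List.prod_map_range'_add, add_comm 1 k]

theorem gammaWord_semiconjBy_band_succ_left (s : ℕ → G) {k j : ℕ} (hkj : k + 1 < j) :
    SemiconjBy (gammaWord s k) (band s (k + 1) j) (band s 1 j) := by
  simp only [SemiconjBy, band, bandConj_one s hkj]
  group

structure BraidRelations (n : ℕ) (s : ℕ → G) : Prop where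
  commute : ∀ i j, 1 ≤ i → i + 2 ≤ j → j ≤ n - 1 → Commute (s i) (s j)
  braid : ∀ i, 1 ≤ i → i ≤ n - 2 → s i * s (i + 1) * s i = s (i + 1) * s i * s (i + 1)

namespace BraidRelations

variable {n : ℕ}

theorem commute_prod_range'_of_lt (hs : BraidRelations n s) {m a b : ℕ} (ha : 1 ≤ a)
    (hm : a + b + 1 ≤ m) (hmn : m ≤ n - 1) : Commute (s m) ((List.range' a b).map s).prod :=
  SemiconjBy.list_map_prod _ fun t ht => by
    rw [List.mem_range'_1] at ht
    exact (hs.commute t m (by omega) (by omega) hmn).symm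

theorem commute_prod_range'_of_gt (hs : BraidRelations n s) {m a b : ℕ} (hm : 1 ≤ m)
    (ha : m + 2 ≤ a) (hb : a + b ≤ n) : Commute (s m) ((List.range' a b).map s).prod :=
  SemiconjBy.list_map_prod _ fun t ht => by
    rw [List.mem_range'_1] at ht
    exact hs.commute m t hm (by omega) (by omega)

theorem semiconjBy_band_add_two (hs : BraidRelations n s) {p m : ℕ} (hp : 1 ≤ p) (hpm : p ≤ m)
    (hmn : m + 2 ≤ n) :
    SemiconjBy (s (m + 1)) (band s p (m + 2)) (band s p (m + 1)) := by
  have hconj : band s p (m + 2) = bandConj s p (m + 1) * (s m * s (m + 1) * (s m)⁻¹) *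
      (bandConj s p (m + 1))⁻¹ := by
    rw [band, bandConj_succ s hpm, show m + 2 - 1 = m + 1 by omega]
    group
  have hbraid : SemiconjBy (s (m + 1)) (s m * s (m + 1) * (s m)⁻¹) (s m) := by
    rw [SemiconjBy, ← mul_assoc, ← mul_assoc, ← hs.braid m (by omega) (by omega)]
    group
  have hcomm : Commute (s (m + 1)) (bandConj s p (m + 1)) :=
    hs.commute_prod_range'_of_lt hp (by omega) (by omega)
  rw [hconj, band]
  exact (SemiconjBy.mul_right hcomm hbraid).mul_right hcomm.inv_right

theorem semiconjBy_prod_range'_band (hs : BraidRelations n s) {i d : ℕ} (hi : 1 ≤ i)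
    (hd : i + d + 1 ≤ n) :
    SemiconjBy ((List.range' (i + 1) d).map s).prod (band s i (i + d + 1)) (s i) := by
  induction d with
  | zero => simp [band_succ]
  | succ d ih =>
    have hstep := hs.semiconjBy_band_add_two hi (m := i + d) (by omega) (by omega)
    rw [show i + d + 2 = i + (d + 1) + 1 by omega] at hstep
    rw [List.range'_1_concat, List.map_append, List.prod_append, List.map_singleton,
      List.prod_singleton, show i + 1 + d = i + d + 1 by omega]
    exact (ih (by omega)).mul_left hstep

theorem gammaWord_semiconjBy (hs : BraidRelations n s) {k m : ℕ} (hm : 1 ≤ m)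
    (hmk : m + 1 ≤ k) (hkn : k ≤ n - 1) :
    SemiconjBy (gammaWord s k) (s m) (s (m + 1)) := by
  obtain ⟨r, rfl⟩ := Nat.exists_eq_add_of_le hmk
  have hsplit : gammaWord s (m + 1 + r) = ((List.range' 1 (m - 1)).map s).prod *
      (s m * s (m + 1)) * ((List.range' (m + 2) r).map s).prod := by
    rw [gammaWord, show m + 1 + r = m - 1 + (2 + r) by omega, List.prod_map_range'_add,
      List.prod_map_range'_add, show 1 + (m - 1) = m by omega, mul_assoc]
    simp [List.range'_succ]
  have hbraid : SemiconjBy (s m * s (m + 1)) (s m) (s (m + 1)) := by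
    rw [SemiconjBy, hs.braid m hm (by omega), mul_assoc]
  have hleft : Commute (s (m + 1)) ((List.range' 1 (m - 1)).map s).prod :=
    hs.commute_prod_range'_of_lt le_rfl (by omega) (by omega)
  have hright : Commute (s m) ((List.range' (m + 2) r).map s).prod :=
    hs.commute_prod_range'_of_gt hm le_rfl (by omega)
  rw [hsplit]
  exact (SemiconjBy.mul_left hleft.symm hbraid).mul_left hright.symm

theorem gammaWord_semiconjBy_band_of_le (hs : BraidRelations n s) {k i j : ℕ} (hi : 1 ≤ i)
    (hij : i < j) (hjk : j ≤ k) (hkn : k ≤ n - 1) :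
    SemiconjBy (gammaWord s k) (band s i j) (band s (i + 1) (j + 1)) := by
  have hshift : (List.range' (i + 1) (j + 1 - 1 - (i + 1))).map s =
      (List.range' i (j - 1 - i)).map (fun t => s (t + 1)) := by
    rw [show j + 1 - 1 - (i + 1) = j - 1 - i by omega, add_comm i 1, ← List.map_add_range',
      List.map_map]
    simp [Function.comp_def, add_comm]
  apply semiconjBy_band
  · rw [bandConj, bandConj, hshift]
    exact SemiconjBy.list_map_prod _ fun t ht => by
      rw [List.mem_range'_1] at ht
      exact hs.gammaWord_semiconjBy (by omega) (by omega) hkn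
  · rw [show j + 1 - 1 = j - 1 + 1 by omega]
    exact hs.gammaWord_semiconjBy (by omega) (by omega) hkn

theorem gammaWord_semiconjBy_band_succ (hs : BraidRelations n s) {k i : ℕ} (hi : 1 ≤ i)
    (hik : i ≤ k) (hkn : k ≤ n - 1) :
    SemiconjBy (gammaWord s k) (band s i (k + 1)) (band s 1 (i + 1)) := by
  obtain ⟨d, rfl⟩ := Nat.exists_eq_add_of_le hik
  set P := ((List.range' 1 (i - 1)).map s).prod
  have hsplit : gammaWord s (i + d) = P * s i * ((List.range' (i + 1) d).map s).prod := by
    rw [gammaWord, show i + d = i - 1 + 1 + d by omega, List.prod_map_range'_add,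
      List.prod_map_range'_add, show 1 + (i - 1 + 1) = i + 1 by omega,
      show 1 + (i - 1) = i by omega]
    simp [P]
  have hband : band s 1 (i + 1) = P * s i * P⁻¹ := by
    simp [band, bandConj, P]
  rw [hsplit, hband]
  refine SemiconjBy.mul_left ?_ (hs.semiconjBy_prod_range'_band hi (by omega))
  rw [SemiconjBy]
  group

theorem commute_gammaWord (hs : BraidRelations n s) {k u : ℕ} (hu : k + 2 ≤ u)
    (hun : u ≤ n - 1) :
    Commute (gammaWord s k) (s u) :=
  (hs.commute_prod_range'_of_lt le_rfl (by omega) hun).symm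

theorem gammaWord_commute_band (hs : BraidRelations n s) {k i j : ℕ} (hki : k + 1 < i)
    (hij : i < j) (hjn : j ≤ n) :
    Commute (gammaWord s k) (band s i j) :=
  semiconjBy_band
    (SemiconjBy.list_map_prod _ fun t ht => by
      rw [List.mem_range'_1] at ht
      exact hs.commute_gammaWord (by omega) (by omega))
    (hs.commute_gammaWord (by omega) (by omega))

end BraidRelations

end Braid

theorem stmt_10_general {G : Type*} [Group G] (n : ℕ) (s : ℕ → G)
    (hcomm : ∀ i j, 1 ≤ i → 1 ≤ j → i ≤ n - 1 → j ≤ n - 1 →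
      (i + 2 ≤ j ∨ j + 2 ≤ i) → s i * s j = s j * s i)
    (hyb : ∀ i, 1 ≤ i → i ≤ n - 2 →
      s i * s (i + 1) * s i = s (i + 1) * s i * s (i + 1))
    (k i j : ℕ) (hkn : k ≤ n - 1)
    (hi1 : 1 ≤ i) (hij : i < j) (hjn : j ≤ n)
    (hnot : ¬(i < k + 1 ∧ k + 1 < j)) :
    gammaWord s k * band s i j =
      band s (min (tauCycle k i) (tauCycle k j)) (max (tauCycle k i) (tauCycle k j)) *
        gammaWord s k := by
  have hs : BraidRelations n s :=
    ⟨fun a b ha hab hb => hcomm a b ha (by omega) (by omega) hb (.inl hab), hyb⟩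
  rcases lt_trichotomy i (k + 1) with hik | rfl | hki
  · rw [tauCycle_of_le hi1 (by omega)]
    rcases (show j ≤ k + 1 by omega).lt_or_eq with hjk | rfl
    · rw [tauCycle_of_le (by omega) (by omega), min_eq_left (by omega), max_eq_right (by omega)]
      exact hs.gammaWord_semiconjBy_band_of_le hi1 hij (by omega) hkn
    · rw [tauCycle_succ_self, min_eq_right (by omega), max_eq_left (by omega)]
      exact hs.gammaWord_semiconjBy_band_succ hi1 (by omega) hkn
  · rw [tauCycle_succ_self, tauCycle_of_lt hij, min_eq_left (by omega), max_eq_right (by omega)]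
    exact gammaWord_semiconjBy_band_succ_left s hij
  · rw [tauCycle_of_lt hki, tauCycle_of_lt (hki.trans hij), min_eq_left hij.le,
      max_eq_right hij.le]
    exact hs.gammaWord_commute_band hki hij hjn

/-- In a group with elements `s₁, …, s_{n-1}` satisfying the commutation and
Yang–Baxter (braid) relations, for `1 ≤ k ≤ n-1` and `1 ≤ i < j ≤ n` such that
it is not the case that `i < k+1 < j`, the band `a_{i,j}` conjugates past `γ_k`
according to the cycle `τ_k`:
`γ_k · a_{i,j} = a_{i',j'} · γ_k` where `{i', j'} = {τ_k(i), τ_k(j)}`, `i' < j'`. -/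
theorem stmt_10 {G : Type*} [Group G] (n : ℕ) (hn : 2 ≤ n) (s : ℕ → G)
    (hcomm : ∀ i j, 1 ≤ i → 1 ≤ j → i ≤ n - 1 → j ≤ n - 1 →
      (i + 2 ≤ j ∨ j + 2 ≤ i) → s i * s j = s j * s i)
    (hyb : ∀ i, 1 ≤ i → i ≤ n - 2 →
      s i * s (i + 1) * s i = s (i + 1) * s i * s (i + 1))
    (k i j : ℕ) (hk1 : 1 ≤ k) (hkn : k ≤ n - 1)
    (hi1 : 1 ≤ i) (hij : i < j) (hjn : j ≤ n)
    (hnot : ¬(i < k + 1 ∧ k + 1 < j)) :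
    gammaWord s k * band s i j =
      band s (min (tauCycle k i) (tauCycle k j)) (max (tauCycle k i) (tauCycle k j)) *
        gammaWord s k :=
  stmt_10_general n s hcomm hyb k i j hkn hi1 hij hjn hnot
end
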